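/- Let Q be a quiver with finitely many vertices such that all singular vertices lie in Q'⁰ ⊆ Q⁰ and every cycle meets Q'⁰, and suppose Q'⁰ = {v₁,…,v_m}. Let e = v₁ + ⋯ + v_m ∈ L_k(Q). Then e is a full idempotent: L_k(Q) e L_k(Q) = L_k(Q). -/

import Mathlib

structure Qvr where
  V : Type
  E : Type
  s : E → V
  r : E → V

namespace Qvr

variable (Q : Qvr)

/-- A finite list of edges is a path if consecutive edges are composable. -/
def IsPath (μ : List Q.E) : Prop :=
  μ.Chain' (fun e f => Q.r e = Q.s f)

/-- The source of a nonempty path. -/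
def pathSrc (μ : List Q.E) (h : μ ≠ []) : Q.V :=
  Q.s (μ.head h)

/-- The range of a nonempty path. -/
def pathRng (μ : List Q.E) (h : μ ≠ []) : Q.V :=
  Q.r (μ.getLast h)

/-- A cycle is a nonempty closed path with pairwise distinct sources of its edges. -/
def IsCycle (μ : List Q.E) : Prop :=
  ∃ h : μ ≠ [], Q.IsPath μ ∧ Q.pathRng μ h = Q.pathSrc μ h ∧ (μ.map Q.s).Nodup

/-- Every cycle of `Q` passes through a vertex of `W`. -/
def CyclesMeet (W : Set Q.V) : Prop :=
  ∀ μ : List Q.E, Q.IsCycle μ → ∃ e ∈ μ, Q.s e ∈ W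

/-- A sink is a vertex emitting no edges. -/
def IsSink (v : Q.V) : Prop := ∀ e : Q.E, Q.s e ≠ v

/-- A regular vertex emits at least one and only finitely many edges. -/
def IsRegular (v : Q.V) : Prop :=
  {e : Q.E | Q.s e = v}.Nonempty ∧ {e : Q.E | Q.s e = v}.Finite

end Qvr

/-- Generators of the Leavitt path algebra: vertices, edges and ghost edges. -/
inductive LGen (Q : Qvr) : Type
  | vert : Q.V → LGen Q
  | edge : Q.E → LGen Q
  | ghost : Q.E → LGen Q

/-- The canonical generators inside the free algebra. -/
def lgen (k : Type) [Field k] (Q : Qvr) (x : LGen Q) : FreeAlgebra k (LGen Q) :=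
  FreeAlgebra.ι k x

/-- The defining relations of the Leavitt path algebra of a quiver with finitely many
vertices: the vertices are pairwise orthogonal idempotents summing to `1`, together with
the path algebra relations and the Cuntz–Krieger relations (CK-2 imposed at regular
vertices). -/
inductive LRel (k : Type) [Field k] (Q : Qvr) [Fintype Q.V] :
    FreeAlgebra k (LGen Q) → FreeAlgebra k (LGen Q) → Prop
  | orth (v w : Q.V) (h : v ≠ w) :
      LRel k Q (lgen k Q (.vert v) * lgen k Q (.vert w)) 0
  | idem (v : Q.V) :
      LRel k Q (lgen k Q (.vert v) * lgen k Q (.vert v)) (lgen k Q (.vert v))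
  | src_edge (e : Q.E) :
      LRel k Q (lgen k Q (.vert (Q.s e)) * lgen k Q (.edge e)) (lgen k Q (.edge e))
  | edge_rng (e : Q.E) :
      LRel k Q (lgen k Q (.edge e) * lgen k Q (.vert (Q.r e))) (lgen k Q (.edge e))
  | rng_ghost (e : Q.E) :
      LRel k Q (lgen k Q (.vert (Q.r e)) * lgen k Q (.ghost e)) (lgen k Q (.ghost e))
  | ghost_src (e : Q.E) :
      LRel k Q (lgen k Q (.ghost e) * lgen k Q (.vert (Q.s e))) (lgen k Q (.ghost e))
  | ck1_eq (e : Q.E) :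
      LRel k Q (lgen k Q (.ghost e) * lgen k Q (.edge e)) (lgen k Q (.vert (Q.r e)))
  | ck1_ne (e f : Q.E) (h : e ≠ f) :
      LRel k Q (lgen k Q (.ghost e) * lgen k Q (.edge f)) 0
  | ck2 (v : Q.V) (h : {e : Q.E | Q.s e = v}.Finite) (hne : {e : Q.E | Q.s e = v}.Nonempty) :
      LRel k Q (lgen k Q (.vert v)) (∑ e ∈ h.toFinset, lgen k Q (.edge e) * lgen k Q (.ghost e))
  | unit : LRel k Q 1 (∑ v : Q.V, lgen k Q (.vert v))

/-- The Leavitt path algebra of `Q` with coefficients in `k`. -/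
def LPA (k : Type) [Field k] (Q : Qvr) [Fintype Q.V] : Type :=
  RingQuot (LRel k Q)

noncomputable instance (k : Type) [Field k] (Q : Qvr) [Fintype Q.V] : Ring (LPA k Q) :=
  inferInstanceAs (Ring (RingQuot (LRel k Q)))

noncomputable instance (k : Type) [Field k] (Q : Qvr) [Fintype Q.V] : Algebra k (LPA k Q) :=
  inferInstanceAs (Algebra k (RingQuot (LRel k Q)))

/-- The vertex idempotent `v ∈ L_k(Q)`. -/
noncomputable def lv (k : Type) [Field k] (Q : Qvr) [Fintype Q.V] (v : Q.V) : LPA k Q :=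
  RingQuot.mkAlgHom k (LRel k Q) (lgen k Q (.vert v))

/-- The edge generator `e ∈ L_k(Q)`. -/
noncomputable def le (k : Type) [Field k] (Q : Qvr) [Fintype Q.V] (e : Q.E) : LPA k Q :=
  RingQuot.mkAlgHom k (LRel k Q) (lgen k Q (.edge e))

/-- The ghost edge generator `e* ∈ L_k(Q)`. -/
noncomputable def lg (k : Type) [Field k] (Q : Qvr) [Fintype Q.V] (e : Q.E) : LPA k Q :=
  RingQuot.mkAlgHom k (LRel k Q) (lgen k Q (.ghost e))

/-!
The vertices lying in the ideal `L_k(Q) e L_k(Q)` include `Q'⁰` and, by CK-2, form a saturated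
set. A vertex outside it would be regular and emit an edge to another vertex outside it; by
finiteness such edges close up into a cycle avoiding `Q'⁰`. So every vertex, hence `1 = ∑ v`, lies
in the ideal.
-/

namespace TwoSidedIdeal

theorem mem_span_singleton_iff {R : Type*} [Ring R] {x y : R} :
    y ∈ span {x} ↔ ∃ (n : ℕ) (a b : Fin n → R), ∑ i : Fin n, a i * x * b i = y := by
  constructor
  · rw [mem_span_iff_mem_addSubgroup_closure]
    intro hy
    induction hy using AddSubgroup.closure_induction with
    | mem _ hz =>
      obtain ⟨_, ⟨a, -, _, rfl, rfl⟩, b, -, rfl⟩ := hz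
      exact ⟨1, fun _ => a, fun _ => b, by simp⟩
    | zero => exact ⟨0, Fin.elim0, Fin.elim0, by simp⟩
    | add _ _ _ _ hy hz =>
      obtain ⟨n, a, b, rfl⟩ := hy
      obtain ⟨m, c, d, rfl⟩ := hz
      exact ⟨n + m, Fin.append a c, Fin.append b d, by simp [Fin.sum_univ_add]⟩
    | neg _ _ hy =>
      obtain ⟨n, a, b, rfl⟩ := hy
      exact ⟨n, -a, b, by simp [Finset.sum_neg_distrib]⟩
  · rintro ⟨n, a, b, rfl⟩
    exact finsetSum_mem _ _ _ fun i _ =>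
      mul_mem_right _ _ _ (mul_mem_left _ _ _ (subset_span rfl))

end TwoSidedIdeal

theorem exists_lt_apply_eq_injOn_Iio {α : Type*} [Finite α] (f : ℕ → α) :
    ∃ i j, i < j ∧ f i = f j ∧ Set.InjOn f (Set.Iio j) := by
  classical
  have hrep : ∃ j, ∃ i < j, f i = f j := by
    obtain ⟨i, j, hne, heq⟩ := Finite.exists_ne_map_eq_of_infinite f
    rcases hne.lt_or_gt with h | h
    exacts [⟨j, i, h, heq⟩, ⟨i, j, h, heq.symm⟩]
  obtain ⟨i, hij, heq⟩ := Nat.find_spec hrep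
  refine ⟨i, Nat.find hrep, hij, heq, fun a ha b hb hab => ?_⟩
  by_contra hne
  rcases Ne.lt_or_gt hne with h | h
  exacts [Nat.find_min hrep hb ⟨a, h, hab⟩, Nat.find_min hrep ha ⟨b, h, hab.symm⟩]

namespace Qvr

variable (Q : Qvr)

def IsSaturated (H : Set Q.V) : Prop :=
  ∀ v, Q.IsRegular v → (∀ e, Q.s e = v → Q.r e ∈ H) → v ∈ H

variable {Q}

theorem isCycle_map_range' (edge : ℕ → Q.E) (hpath : ∀ t, Q.r (edge t) = Q.s (edge (t + 1)))
    {i j : ℕ} (hij : i < j) (hclosed : Q.s (edge i) = Q.s (edge j))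
    (hinj : Set.InjOn (Q.s ∘ edge) (Set.Ico i j)) :
    Q.IsCycle ((List.range' i (j - i)).map edge) := by
  have hne : (List.range' i (j - i)).map edge ≠ [] := by
    simp only [ne_eq, List.map_eq_nil_iff, List.range'_eq_nil_iff]; omega
  refine ⟨hne, ?_, ?_, ?_⟩
  · exact List.isChain_map_of_isChain edge (fun a b (hab : b = a + 1) => hab ▸ hpath a)
      (List.isChain_range' i (j - i) 1)
  · simp only [pathRng, pathSrc, List.getLast_map, List.head_map, List.head_range',
      List.getLast_range']
    rw [hpath, hclosed]
    congr 2
    omega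
  · rw [List.map_map]
    refine (List.nodup_range' ..).map_on fun a ha b hb hab => hinj ?_ ?_ hab
    all_goals simp only [List.mem_range'_1] at ha hb; simp only [Set.mem_Ico]; omega

theorem exists_isCycle_of_forall_exists_edge [Finite Q.V] {U : Set Q.V} (hU : U.Nonempty)
    (hout : ∀ v ∈ U, ∃ e, Q.s e = v ∧ Q.r e ∈ U) :
    ∃ μ, Q.IsCycle μ ∧ ∀ e ∈ μ, Q.s e ∈ U := by
  choose next hsrc hrng using fun v : U => hout v v.2
  let step : U → U := fun v => ⟨Q.r (next v), hrng v⟩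
  let walk : ℕ → U := fun t => step^[t] ⟨hU.some, hU.some_mem⟩
  have hpath (t : ℕ) : Q.r (next (walk t)) = Q.s (next (walk (t + 1))) := by
    rw [hsrc, show walk (t + 1) = step (walk t) from Function.iterate_succ_apply' ..]
  obtain ⟨i, j, hij, hclosed, hinj⟩ := exists_lt_apply_eq_injOn_Iio walk
  refine ⟨_, isCycle_map_range' (next ∘ walk) hpath hij ?_ ?_, ?_⟩
  · simp only [Function.comp, hsrc, hclosed]
  · intro a ha b hb hab
    simp only [Function.comp, hsrc] at hab
    exact hinj (Set.Ico_subset_Iio_self ha) (Set.Ico_subset_Iio_self hb) (Subtype.ext hab)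
  · simp only [List.mem_map, Function.comp]
    rintro _ ⟨t, -, rfl⟩
    exact hsrc _ ▸ (walk t).2

theorem eq_univ_of_isSaturated [Finite Q.V] {W H : Set Q.V}
    (hsing : ∀ v, v ∉ W → Q.IsRegular v) (hcyc : Q.CyclesMeet W)
    (hWH : W ⊆ H) (hH : Q.IsSaturated H) : H = Set.univ := by
  by_contra hne
  obtain ⟨μ, hμ, hμH⟩ := exists_isCycle_of_forall_exists_edge (U := Hᶜ)
    (Set.nonempty_compl.mpr hne) fun v hv => by
      by_contra! hin
      exact hv (hH v (hsing v fun hvW => hv (hWH hvW)) fun e he => not_not.mp (hin e he))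
  obtain ⟨e, he, heW⟩ := hcyc μ hμ
  exact hμH e he (hWH heW)

end Qvr

section LeavittPathAlgebra

variable {k : Type} [Field k] {Q : Qvr} [Fintype Q.V]

theorem lv_mul_self (v : Q.V) : lv k Q v * lv k Q v = lv k Q v := by
  have h := RingQuot.mkAlgHom_rel k (LRel.idem (k := k) v)
  rwa [map_mul] at h

theorem lv_mul_lv_of_ne {v w : Q.V} (h : v ≠ w) : lv k Q v * lv k Q w = 0 := by
  have h := RingQuot.mkAlgHom_rel k (LRel.orth (k := k) v w h)
  rwa [map_mul, map_zero] at h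

theorem sum_lv : ∑ v : Q.V, lv k Q v = 1 := by
  have h := RingQuot.mkAlgHom_rel k (LRel.unit (k := k) (Q := Q))
  rw [map_one, map_sum] at h
  exact h.symm

theorem le_mul_lv_rng (e : Q.E) : le k Q e * lv k Q (Q.r e) = le k Q e := by
  have h := RingQuot.mkAlgHom_rel k (LRel.edge_rng (k := k) e)
  rwa [map_mul] at h

theorem lv_eq_sum_le_mul_lg {v : Q.V} (hv : Q.IsRegular v) :
    lv k Q v = ∑ e ∈ hv.2.toFinset, le k Q e * lg k Q e := by
  have h := RingQuot.mkAlgHom_rel k (LRel.ck2 (k := k) v hv.2 hv.1)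
  simp only [map_sum, map_mul] at h
  exact h

theorem lv_mul_sum_lv_of_mem {v : Q.V} {s : Finset Q.V} (hv : v ∈ s) :
    lv k Q v * ∑ w ∈ s, lv k Q w = lv k Q v := by
  rw [Finset.mul_sum, Finset.sum_eq_single_of_mem v hv fun w _ hwv => lv_mul_lv_of_ne hwv.symm,
    lv_mul_self]

variable (k Q)

/-- By CK-2, `v = ∑ e e* = ∑ e · r(e) · e*` for a regular vertex `v`. -/
theorem isSaturated_setOf_lv_mem (I : TwoSidedIdeal (LPA k Q)) :
    Q.IsSaturated {v | lv k Q v ∈ I} := by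
  intro v hv hrng
  rw [Set.mem_ofPred_eq, lv_eq_sum_le_mul_lg hv]
  refine I.finsetSum_mem _ _ fun e he => ?_
  rw [← le_mul_lv_rng]
  exact I.mul_mem_right _ _ (I.mul_mem_left _ _ (hrng e (hv.2.mem_toFinset.mp he)))

end LeavittPathAlgebra

/-- Let `Q` have finitely many vertices, with all singular vertices in
`W ⊆ Q⁰` and every cycle meeting `W`.  Then `e = ∑_{v ∈ W} v` is a full idempotent of the
Leavitt path algebra: `L_k(Q) e L_k(Q) = L_k(Q)`, i.e. `1` is a finite sum of elements
`a · e · b`. -/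
theorem stmt18 (k : Type) [Field k] (Q : Qvr) [Fintype Q.V] (W : Set Q.V)
    (hsing : ∀ v : Q.V, v ∉ W → Q.IsRegular v) (hcyc : Q.CyclesMeet W) :
    ∃ (n : ℕ) (a b : Fin n → LPA k Q),
      ∑ i : Fin n, a i * (∑ v ∈ (Set.toFinite W).toFinset, lv k Q v) * b i = 1 := by
  set I := TwoSidedIdeal.span {∑ v ∈ (Set.toFinite W).toFinset, lv k Q v}
  have hWI : W ⊆ {v | lv k Q v ∈ I} := fun v hv => by
    rw [Set.mem_ofPred_eq, ← lv_mul_sum_lv_of_mem ((Set.toFinite W).mem_toFinset.mpr hv)]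
    exact I.mul_mem_left _ _ (TwoSidedIdeal.subset_span rfl)
  have hall := Q.eq_univ_of_isSaturated hsing hcyc hWI (isSaturated_setOf_lv_mem k Q I)
  have hone : (1 : LPA k Q) ∈ I := by
    rw [← sum_lv]
    exact I.finsetSum_mem _ _ fun v _ => Set.eq_univ_iff_forall.mp hall v
  exact TwoSidedIdeal.mem_span_singleton_iff.mp hone
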